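/- Let S be a standard tableau of shape (n−k,k) with associated crossingless matching m(S), and let Y_S be the associated component set. For every weight sequence w, the flag Φ(w) lies in Y_S if and only if w orients m(S). -/

import Mathlib

/-!
`Φ(w)` is spanned by coordinate vectors, and `N`, its powers and their preimages act on such
spans by shifting both Jordan blocks, so each condition cutting out `Y_S` becomes arithmetic in
the counts `t_i`, `b_i`. A cup condition `N^δ Φ(w)_{σ(i)} = Φ(w)_{i-1}` says that `w` has as
many `∧` as `∨` on `[i, σ(i)]`. The interior of a cup is tiled by smaller cups, so by induction
on the width this holds for every cup iff `w` labels the two ends of every cup differently. Then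
each of the `k` cups carries exactly one `∨`, leaving none for the rays. Conversely, no cup passes
over a ray `m`, so for any orientation `b_m` is the number of cups left of `m`, the same for `w`
and for `S`; the room to the left and right of `m` gives the two inequalities under which
`(N^b)⁻¹ (range N^(n-k-t+b)) = span (p_1, …, p_t, q_1, …, q_b)`.
-/

open Module

namespace Springer

/-- The nilpotent endomorphism `N` of `ℂ^n` with two Jordan blocks of sizes `n-k` and `k`:
the basis vectors `e 0, …, e (n-k-1)` are `p 1, …, p (n-k)` and
`e (n-k), …, e (n-1)` are `q 1, …, q k`; `N` shifts each block down by one. -/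
def Nmap (n k : ℕ) : (Fin n → ℂ) →ₗ[ℂ] (Fin n → ℂ) where
  toFun x j := if h : j.val + 1 < n ∧ j.val + 1 ≠ n - k then x ⟨j.val + 1, h.1⟩ else 0
  map_add' x y := by
    funext j
    by_cases h : j.val + 1 < n ∧ j.val + 1 ≠ n - k <;> simp [h]
  map_smul' c x := by
    funext j
    by_cases h : j.val + 1 < n ∧ j.val + 1 ≠ n - k <;> simp [h]

/-- `span (p 1, …, p t, q 1, …, q b)` inside `ℂ^n`. -/
noncomputable def spanPQ (n k t b : ℕ) : Submodule ℂ (Fin n → ℂ) :=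
  Submodule.span ℂ {x | ∃ j : Fin n,
    ((j.val < t ∧ j.val < n - k) ∨ (n - k ≤ j.val ∧ j.val < n - k + b)) ∧ x = Pi.single j 1}

/-- `P = span (p 1, …, p (n-k))`. -/
noncomputable def Pmod (n k : ℕ) : Submodule ℂ (Fin n → ℂ) := spanPQ n k (n - k) 0

/-- `Q = span (q 1, …, q k)`. -/
noncomputable def Qmod (n k : ℕ) : Submodule ℂ (Fin n → ℂ) := spanPQ n k 0 k

/-- The projection of `V` onto `Q` along `P`. -/
def projQ (n k : ℕ) : (Fin n → ℂ) →ₗ[ℂ] (Fin n → ℂ) where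
  toFun x j := if n - k ≤ j.val then x j else 0
  map_add' x y := by
    funext j
    by_cases h : n - k ≤ j.val
    · simp only [Pi.add_apply, if_pos h]
    · simp only [Pi.add_apply, if_neg h, add_zero]
  map_smul' c x := by
    funext j
    by_cases h : n - k ≤ j.val
    · simp only [Pi.smul_apply, smul_eq_mul, if_pos h, RingHom.id_apply]
    · simp only [Pi.smul_apply, smul_eq_mul, if_neg h, mul_zero, RingHom.id_apply]

/-- A complete `N`-invariant flag in `ℂ^n`: a chain `F 0 ⊆ ⋯ ⊆ F n` with `dim F i = i`
(thus `F 0 = 0` and `F n = V`) and `N (F (i+1)) ⊆ F i`. -/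
def IsNFlag (n k : ℕ) (F : Fin (n + 1) → Submodule ℂ (Fin n → ℂ)) : Prop :=
  Monotone F ∧ (∀ i : Fin (n + 1), finrank ℂ (F i) = i.val) ∧
    ∀ i : Fin n, Submodule.map (Nmap n k) (F i.succ) ≤ F i.castSucc

/-- A flag is torus fixed if each subspace is spanned by its intersections with `P` and `Q`. -/
def TorusFixed (n k : ℕ) (F : Fin (n + 1) → Submodule ℂ (Fin n → ℂ)) : Prop :=
  ∀ i, F i = (F i ⊓ Pmod n k) ⊔ (F i ⊓ Qmod n k)

/-- A weight sequence (row-strict tableau) of shape `(n-k, k)`: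
`true` encodes `∨` and `false` encodes `∧`; there are exactly `k` symbols `∨`. -/
def IsWeightSeq (n k : ℕ) (w : Fin n → Bool) : Prop :=
  (Finset.univ.filter fun i => w i = true).card = k

/-- `t i` = number of 1-based positions `≤ i` labelled `∧`. -/
def tcount (n : ℕ) (w : Fin n → Bool) (i : ℕ) : ℕ :=
  (Finset.univ.filter fun j : Fin n => j.val < i ∧ w j = false).card

/-- `b i` = number of 1-based positions `≤ i` labelled `∨`. -/
def bcount (n : ℕ) (w : Fin n → Bool) (i : ℕ) : ℕ :=
  (Finset.univ.filter fun j : Fin n => j.val < i ∧ w j = true).card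

/-- The torus fixed flag `Φ(w)` attached to a weight sequence `w`:
`Φ(w) i = span (p 1, …, p (t i), q 1, …, q (b i))`. -/
noncomputable def PhiFlag (n k : ℕ) (w : Fin n → Bool) : Fin (n + 1) → Submodule ℂ (Fin n → ℂ) :=
  fun i => spanPQ n k (tcount n w i.val) (bcount n w i.val)

/-- A crossingless matching on the points `1, …, n`: a set of cups `(i, j)` with
`1 ≤ i < j ≤ n`, pairwise disjoint, mutually non-crossing, and such that no unmatched
point (ray) lies strictly inside any cup. -/
structure CrossinglessMatching (n : ℕ) where
  cups : Finset (ℕ × ℕ)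
  mem_range : ∀ p ∈ cups, 1 ≤ p.1 ∧ p.1 < p.2 ∧ p.2 ≤ n
  disjoint' : ∀ p ∈ cups, ∀ q ∈ cups, p ≠ q →
    p.1 ≠ q.1 ∧ p.1 ≠ q.2 ∧ p.2 ≠ q.1 ∧ p.2 ≠ q.2
  noncross : ∀ p ∈ cups, ∀ q ∈ cups, ¬(p.1 < q.1 ∧ q.1 < p.2 ∧ p.2 < q.2)
  rays_outside : ∀ p ∈ cups, ∀ m : ℕ, p.1 < m → m < p.2 → ∃ q ∈ cups, m = q.1 ∨ m = q.2

/-- The point `m ∈ {1, …, n}` is matched (lies on a cup) in `C`. -/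
def Matched (n : ℕ) (C : CrossinglessMatching n) (m : ℕ) : Prop :=
  ∃ p ∈ C.cups, m = p.1 ∨ m = p.2

/-- A standard tableau of shape `(n-k, k)`: a filling of the two-row Young diagram by
the numbers `1, …, n`, each used exactly once, with rows and columns strictly
decreasing read from the top left. -/
structure StandardTableau (n k : ℕ) where
  top : Fin (n - k) → ℕ
  bot : Fin k → ℕ
  top_strict : ∀ i j : Fin (n - k), i < j → top j < top i
  bot_strict : ∀ i j : Fin k, i < j → bot j < bot i
  col_strict : ∀ (i : Fin (n - k)) (j : Fin k), i.val = j.val → bot j < top i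
  mem_iff : ∀ m : ℕ, (1 ≤ m ∧ m ≤ n) ↔ ((∃ i, top i = m) ∨ (∃ j, bot j = m))
  top_ne_bot : ∀ (i : Fin (n - k)) (j : Fin k), top i ≠ bot j

/-- `C` is the crossingless matching `m(S)` associated with the standard tableau `S`:
it has `k` cups and its left cup endpoints are exactly the bottom-row entries of `S`. -/
def IsMatchOf (n k : ℕ) (S : StandardTableau n k) (C : CrossinglessMatching n) : Prop :=
  C.cups.card = k ∧ ∀ m : ℕ, (∃ p ∈ C.cups, p.1 = m) ↔ ∃ j, S.bot j = m

/-- The weight sequence of a standard tableau: `∨` (i.e. `true`) exactly on the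
bottom-row entries. -/
def tabWeight (n k : ℕ) (S : StandardTableau n k) : Fin n → Bool :=
  fun j => decide (∃ i, S.bot i = j.val + 1)

/-- The cup conditions cutting out `Y_S`: for every cup `(i, σ i)` of the matching,
`N ^ δ i (F (σ i)) = F (i - 1)` where `δ i = (σ i - i + 1)/2`. -/
def CupCond (n k : ℕ) (C : CrossinglessMatching n)
    (F : Fin (n + 1) → Submodule ℂ (Fin n → ℂ)) : Prop :=
  ∀ p ∈ C.cups, ∀ (h1 : p.1 - 1 < n + 1) (h2 : p.2 < n + 1),
    Submodule.map ((Nmap n k) ^ ((p.2 - p.1 + 1) / 2)) (F ⟨p.2, h2⟩) = F ⟨p.1 - 1, h1⟩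

/-- The ray conditions cutting out `Y_S` (for the weight sequence of `S`): for every
ray `m` of the matching, `F m = (N ^ b m)⁻¹ (range (N ^ (n - k - t m + b m)))`. -/
def RayCond (n k : ℕ) (w : Fin n → Bool) (C : CrossinglessMatching n)
    (F : Fin (n + 1) → Submodule ℂ (Fin n → ℂ)) : Prop :=
  ∀ m : ℕ, 1 ≤ m → ∀ hm : m < n + 1, ¬ Matched n C m →
    F ⟨m, hm⟩ = Submodule.comap ((Nmap n k) ^ (bcount n w m))
      (LinearMap.range ((Nmap n k) ^ (n - k - tcount n w m + bcount n w m)))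

/-- Membership in the (Spaltenstein–Vargas–Fung) component `Y_S`, where `C = m(S)`. -/
def InYS (n k : ℕ) (S : StandardTableau n k) (C : CrossinglessMatching n)
    (F : Fin (n + 1) → Submodule ℂ (Fin n → ℂ)) : Prop :=
  IsNFlag n k F ∧ CupCond n k C F ∧ RayCond n k (tabWeight n k S) C F

/-- The weight sequence `v` orients the crossingless matching `C`: opposite labels at
the two endpoints of every cup, and `∧` at every ray. -/
def OrientsMatching (n : ℕ) (v : Fin n → Bool) (C : CrossinglessMatching n) : Prop :=
  (∀ p ∈ C.cups, ∀ (h1 : p.1 - 1 < n) (h2 : p.2 - 1 < n),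
      v ⟨p.1 - 1, h1⟩ ≠ v ⟨p.2 - 1, h2⟩) ∧
  (∀ m : ℕ, 1 ≤ m → m ≤ n → ¬ Matched n C m → ∀ h : m - 1 < n, v ⟨m - 1, h⟩ = false)

/-- `C` is the matching `m(w)` produced from the weight sequence `w` by repeatedly
joining a pair `i < j` with `w i = ∨`, `w j = ∧` and all points strictly between them
already matched, until no such pair remains. -/
def IsMw (n : ℕ) (w : Fin n → Bool) (C : CrossinglessMatching n) : Prop :=
  (∀ p ∈ C.cups, ∀ (h1 : p.1 - 1 < n) (h2 : p.2 - 1 < n),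
      w ⟨p.1 - 1, h1⟩ = true ∧ w ⟨p.2 - 1, h2⟩ = false) ∧
  ¬ ∃ i j : ℕ, 1 ≤ i ∧ i < j ∧ j ≤ n ∧ ¬ Matched n C i ∧ ¬ Matched n C j ∧
      (∀ h : i - 1 < n, w ⟨i - 1, h⟩ = true) ∧ (∀ h : j - 1 < n, w ⟨j - 1, h⟩ = false) ∧
      (∀ m : ℕ, i < m → m < j → Matched n C m)

/-- `Cw` is the completed matching `C(w)`: a crossingless matching with `k` cups
containing `m(w) = Cm` on whose every cup `w` puts opposite labels. -/
def IsCw (n k : ℕ) (w : Fin n → Bool) (Cm Cw : CrossinglessMatching n) : Prop :=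
  Cm.cups ⊆ Cw.cups ∧ Cw.cups.card = k ∧
  ∀ p ∈ Cw.cups, ∀ (h1 : p.1 - 1 < n) (h2 : p.2 - 1 < n),
    w ⟨p.1 - 1, h1⟩ ≠ w ⟨p.2 - 1, h2⟩

/-- Membership in the closed attracting set `St(w)`, where `S = S(w)` and `Cw = C(w)`:
a flag of `Y_{S(w)}` such that `F i = Φ(w) i` for every `i` with `w i = ∧` which is a
left cup endpoint of `C(w)`. -/
def InSt (n k : ℕ) (w : Fin n → Bool) (S : StandardTableau n k)
    (Cw : CrossinglessMatching n) (F : Fin (n + 1) → Submodule ℂ (Fin n → ℂ)) : Prop :=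
  InYS n k S Cw F ∧
  ∀ i : ℕ, ∀ hi : i < n + 1, (∀ h : i - 1 < n, w ⟨i - 1, h⟩ = false) →
    (∃ p ∈ Cw.cups, p.1 = i) → F ⟨i, hi⟩ = PhiFlag n k w ⟨i, hi⟩

/-- The generating relation of `∼_C`: `a ∼ σ(a+1)` whenever `a+1` is a left cup
endpoint of `C`. -/
def cupRel (n : ℕ) (C : CrossinglessMatching n) (a b : ℕ) : Prop :=
  ∃ p ∈ C.cups, p.1 = a + 1 ∧ p.2 = b

/-- The equivalence relation `∼_C` on `{0, 1, …, n}`. -/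
def simRel (n : ℕ) (C : CrossinglessMatching n) : ℕ → ℕ → Prop :=
  Relation.EqvGen (cupRel n C)

/-- The equivalence relation `≈_{C,D}` on `{0, 1, …, n}` generated by `∼_C` and `∼_D`. -/
def approxRel (n : ℕ) (C D : CrossinglessMatching n) : ℕ → ℕ → Prop :=
  Relation.EqvGen (fun a b => cupRel n C a b ∨ cupRel n D a b)

/-- Adjacency in the glued diagram `D̄C`: `i` and `j` are joined by a cup of `C` or of `D`. -/
def Adj (n : ℕ) (C D : CrossinglessMatching n) (i j : ℕ) : Prop :=
  (i, j) ∈ C.cups ∨ (j, i) ∈ C.cups ∨ (i, j) ∈ D.cups ∨ (j, i) ∈ D.cups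

/-- Lying in the same connected component of the glued diagram `D̄C`. -/
def Conn (n : ℕ) (C D : CrossinglessMatching n) : ℕ → ℕ → Prop :=
  Relation.EqvGen (Adj n C D)

/-- The component of `v` in the glued diagram is a circle: every vertex of the
component is matched both in `C` and in `D`. -/
def IsCircleComp (n : ℕ) (C D : CrossinglessMatching n) (v : ℕ) : Prop :=
  ∀ u, Conn n C D u v → Matched n C u ∧ Matched n D u

/-- `v` is the leftmost vertex of its connected component (circle or line) of the
glued diagram. -/
def IsLeftmost (n : ℕ) (C D : CrossinglessMatching n) (v : ℕ) : Prop :=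
  1 ≤ v ∧ v ≤ n ∧ ∀ u, 1 ≤ u → Conn n C D u v → v ≤ u

/-- An orientation of the glued diagram `D̄C` (with `C = m(w)` and `D = m(w')`):
a weight sequence assigning opposite labels to the endpoints of every cup of `C` and
of `D`, agreeing with `w` at every ray of `C` and with `w'` at every ray of `D`. -/
def OrientsGlued (n k : ℕ) (w w' : Fin n → Bool) (C D : CrossinglessMatching n)
    (v : Fin n → Bool) : Prop :=
  IsWeightSeq n k v ∧
  (∀ p ∈ C.cups, ∀ (h1 : p.1 - 1 < n) (h2 : p.2 - 1 < n),
      v ⟨p.1 - 1, h1⟩ ≠ v ⟨p.2 - 1, h2⟩) ∧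
  (∀ p ∈ D.cups, ∀ (h1 : p.1 - 1 < n) (h2 : p.2 - 1 < n),
      v ⟨p.1 - 1, h1⟩ ≠ v ⟨p.2 - 1, h2⟩) ∧
  (∀ i : Fin n, ¬ Matched n C (i.val + 1) → v i = w i) ∧
  (∀ i : Fin n, ¬ Matched n D (i.val + 1) → v i = w' i)

/-- The component of `v0` in the glued diagram is orientable: it admits a labeling of
its vertices by `∧, ∨`, opposite across every edge, agreeing with `w` at every vertex
which is a ray of `C` and with `w'` at every vertex which is a ray of `D`. -/
def ComponentOrientable (n : ℕ) (w w' : Fin n → Bool) (C D : CrossinglessMatching n)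
    (v0 : ℕ) : Prop :=
  ∃ g : ℕ → Bool,
    (∀ i j, Conn n C D i v0 → Adj n C D i j → g i ≠ g j) ∧
    (∀ i, Conn n C D i v0 → 1 ≤ i → i ≤ n → ¬ Matched n C i →
      ∀ h : i - 1 < n, g i = w ⟨i - 1, h⟩) ∧
    (∀ i, Conn n C D i v0 → 1 ≤ i → i ≤ n → ¬ Matched n D i →
      ∀ h : i - 1 < n, g i = w' ⟨i - 1, h⟩)

/-- A walk in the glued multigraph `D̄C` from `a` to `b`: a list of edges, each tagged
by `true` (an edge of `C`) or `false` (an edge of `D`), consecutively incident. -/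
def IsGluedWalk (n : ℕ) (C D : CrossinglessMatching n) : ℕ → ℕ → List (Bool × ℕ × ℕ) → Prop
  | a, b, [] => a = b
  | a, b, e :: es =>
      (if e.1 = true then (e.2.1, e.2.2) ∈ C.cups else (e.2.1, e.2.2) ∈ D.cups) ∧
      ((a = e.2.1 ∧ IsGluedWalk n C D e.2.2 b es) ∨ (a = e.2.2 ∧ IsGluedWalk n C D e.2.1 b es))

/-- The standard flag of `ℂ^n`. -/
noncomputable def stdFlag (n k : ℕ) : Fin (n + 1) → Submodule ℂ (Fin n → ℂ) :=
  fun i => spanPQ n k (min i.val (n - k)) (i.val - (n - k))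

open Finset

section SpanPQ

variable {n k : ℕ}

lemma mem_spanPQ {t b : ℕ} {x : Fin n → ℂ} :
    x ∈ spanPQ n k t b ↔ ∀ j : Fin n, x j ≠ 0 →
      (j.val < t ∧ j.val < n - k) ∨ (n - k ≤ j.val ∧ j.val < n - k + b) := by
  constructor
  · intro hx j hj
    by_contra hc
    let K : Submodule ℂ (Fin n → ℂ) := Submodule.pi
      {j | ¬((j.val < t ∧ j.val < n - k) ∨ (n - k ≤ j.val ∧ j.val < n - k + b))}
      fun _ => ⊥
    have hK : spanPQ n k t b ≤ K := by
      refine Submodule.span_le.2 ?_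
      rintro _ ⟨j, hj, rfl⟩ i hi
      exact Pi.single_eq_of_ne (by rintro rfl; exact hi hj) 1
    exact hj (hK hx j hc)
  · intro hx
    rw [← univ_sum_single x]
    refine Submodule.sum_mem _ fun j _ => ?_
    by_cases hj : x j = 0
    · simp [hj]
    · rw [← mul_one (x j), ← smul_eq_mul, Pi.single_smul]
      exact Submodule.smul_mem _ _ (Submodule.subset_span ⟨j, hx j hj, rfl⟩)

lemma single_mem_spanPQ {t b : ℕ} {j : Fin n} :
    Pi.single j (1 : ℂ) ∈ spanPQ n k t b ↔
      (j.val < t ∧ j.val < n - k) ∨ (n - k ≤ j.val ∧ j.val < n - k + b) :=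
  ⟨fun h => mem_spanPQ.1 h j (by simp), fun h => Submodule.subset_span ⟨j, h, rfl⟩⟩

lemma spanPQ_mono {t b t' b' : ℕ} (ht : t ≤ t') (hb : b ≤ b') :
    spanPQ n k t b ≤ spanPQ n k t' b' := fun x hx =>
  mem_spanPQ.2 fun j hj => by have := mem_spanPQ.1 hx j hj; omega

lemma spanPQ_le_spanPQ_iff {t b t' b' : ℕ} (hk : k ≤ n) (ht : t ≤ n - k) (hb : b ≤ k) :
    spanPQ n k t b ≤ spanPQ n k t' b' ↔ t ≤ t' ∧ b ≤ b' := by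
  refine ⟨fun h => ⟨?_, ?_⟩, fun h => spanPQ_mono h.1 h.2⟩
  · by_contra! h'
    have := single_mem_spanPQ.1
      (h ((single_mem_spanPQ (j := ⟨t', by omega⟩)).2 (by simp only; omega)))
    simp only at this
    omega
  · by_contra! h'
    have := single_mem_spanPQ.1
      (h ((single_mem_spanPQ (j := ⟨n - k + b', by omega⟩)).2 (by simp only; omega)))
    simp only at this
    omega

lemma spanPQ_inj {t b t' b' : ℕ} (hk : k ≤ n) (ht : t ≤ n - k) (hb : b ≤ k)
    (ht' : t' ≤ n - k) (hb' : b' ≤ k) :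
    spanPQ n k t b = spanPQ n k t' b' ↔ t = t' ∧ b = b' := by
  rw [le_antisymm_iff, spanPQ_le_spanPQ_iff hk ht hb, spanPQ_le_spanPQ_iff hk ht' hb']
  omega

lemma spanPQ_eq_top (hk : k ≤ n) : spanPQ n k (n - k) k = ⊤ :=
  eq_top_iff.2 fun _ _ => mem_spanPQ.2 fun j _ => by omega

lemma finrank_spanPQ {t b : ℕ} (hk : k ≤ n) (ht : t ≤ n - k) (hb : b ≤ k) :
    finrank ℂ (spanPQ n k t b) = t + b := by
  let I : Finset ℕ := range t ∪ Ico (n - k) (n - k + b)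
  have hspan : spanPQ n k t b = Submodule.span ℂ (Set.range
      (Pi.basisFun ℂ (Fin n) ∘ (Subtype.val : {j : Fin n // j.val ∈ I} → Fin n))) := by
    rw [spanPQ]
    congr 1
    ext x
    simp only [I, Set.mem_ofPred_eq, Set.mem_range, Function.comp_apply, Pi.basisFun_apply,
      Subtype.exists, mem_union, mem_range, mem_Ico, exists_prop]
    exact exists_congr fun j => by rw [eq_comm (a := x)]; exact and_congr_left fun _ => by omega
  have hI : ({j : Fin n | j.val ∈ I} : Finset _).map Fin.valEmbedding = I := by
    ext m
    simp only [mem_map, mem_filter, mem_univ, true_and, Fin.valEmbedding_apply]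
    refine ⟨by rintro ⟨j, hj, rfl⟩; exact hj, fun hm => ⟨⟨m, ?_⟩, hm, rfl⟩⟩
    simp only [I, mem_union, mem_range, mem_Ico] at hm
    omega
  have hdisj : Disjoint (range t) (Ico (n - k) (n - k + b)) := disjoint_left.2 fun m h h' => by
    simp only [mem_range, mem_Ico] at h h'
    omega
  rw [hspan, finrank_span_eq_card
      ((Pi.basisFun ℂ _).linearIndependent.comp _ Subtype.val_injective),
    Fintype.card_subtype, ← card_map Fin.valEmbedding, hI, card_union_of_disjoint hdisj,
    card_range, Nat.card_Ico]
  omega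

lemma Nmap_apply (x : Fin n → ℂ) (j : Fin n) :
    Nmap n k x j =
      if h : j.val + 1 < n ∧ j.val + 1 ≠ n - k then x ⟨j.val + 1, h.1⟩ else 0 :=
  rfl

lemma Nmap_single {j : ℕ} (hj : j + 1 < n) (hjk : j + 1 ≠ n - k) :
    Nmap n k (Pi.single ⟨j + 1, hj⟩ 1) = Pi.single ⟨j, by omega⟩ 1 := by
  funext i
  simp only [Nmap_apply, Pi.single_apply, Fin.ext_iff]
  split_ifs <;> first | rfl | (exfalso; omega)

lemma map_Nmap_spanPQ {t b : ℕ} (hk : k ≤ n) (ht : t ≤ n - k) (hb : b ≤ k) :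
    Submodule.map (Nmap n k) (spanPQ n k t b) = spanPQ n k (t - 1) (b - 1) := by
  apply le_antisymm
  · rintro _ ⟨x, hx, rfl⟩
    refine mem_spanPQ.2 fun j hj => ?_
    rw [Nmap_apply] at hj
    split_ifs at hj with h
    · have := mem_spanPQ.1 hx _ hj
      simp only at this
      omega
    · exact absurd rfl hj
  · refine Submodule.span_le.2 ?_
    rintro _ ⟨j, hj, rfl⟩
    exact ⟨_, (single_mem_spanPQ (j := ⟨j.val + 1, by omega⟩)).2 (by simp only; omega),
      Nmap_single _ (by omega)⟩

lemma comap_Nmap_spanPQ {t b : ℕ} (hk : k ≤ n) :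
    Submodule.comap (Nmap n k) (spanPQ n k t b) =
      spanPQ n k (min (t + 1) (n - k)) (min (b + 1) k) := by
  ext x
  rw [Submodule.mem_comap, mem_spanPQ, mem_spanPQ]
  constructor
  · intro h i hi
    by_cases hi0 : i.val = 0 ∨ i.val = n - k
    · omega
    · have key := h ⟨i.val - 1, by omega⟩
      rw [Nmap_apply, dif_pos (by simp only; omega)] at key
      have hi' : (⟨i.val - 1 + 1, by omega⟩ : Fin n) = i := Fin.ext (by simp only; omega)
      have := key (by rwa [hi'])
      simp only at this
      omega
  · intro h j hj
    rw [Nmap_apply] at hj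
    split_ifs at hj with hj'
    · have := h _ hj
      simp only at this
      omega
    · exact absurd rfl hj

lemma map_pow_Nmap_spanPQ {t b : ℕ} (hk : k ≤ n) (ht : t ≤ n - k) (hb : b ≤ k) (d : ℕ) :
    Submodule.map (Nmap n k ^ d) (spanPQ n k t b) = spanPQ n k (t - d) (b - d) := by
  induction d with
  | zero => simp [Module.End.one_eq_id]
  | succ d ih =>
    rw [pow_succ', Module.End.mul_eq_comp, Submodule.map_comp, ih,
      map_Nmap_spanPQ hk (by omega) (by omega)]
    rfl

lemma comap_pow_Nmap_spanPQ {t b : ℕ} (hk : k ≤ n) (ht : t ≤ n - k) (hb : b ≤ k) (d : ℕ) :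
    Submodule.comap (Nmap n k ^ d) (spanPQ n k t b) =
      spanPQ n k (min (t + d) (n - k)) (min (b + d) k) := by
  induction d with
  | zero => simp [Module.End.one_eq_id, min_eq_left ht, min_eq_left hb]
  | succ d ih =>
    rw [pow_succ, Module.End.mul_eq_comp, Submodule.comap_comp, ih, comap_Nmap_spanPQ hk]
    congr 1 <;> omega

lemma range_pow_Nmap (hk : k ≤ n) (r : ℕ) :
    LinearMap.range (Nmap n k ^ r) = spanPQ n k (n - k - r) (k - r) := by
  rw [LinearMap.range_eq_map, ← spanPQ_eq_top hk, map_pow_Nmap_spanPQ hk le_rfl le_rfl]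

lemma comap_pow_range_pow_Nmap {t b : ℕ} (hbt : b ≤ t) (hbk : b ≤ k)
    (hroom : t + 2 * k ≤ n + b) :
    Submodule.comap (Nmap n k ^ b) (LinearMap.range (Nmap n k ^ (n - k - t + b))) =
      spanPQ n k t b := by
  have hk : k ≤ n := by omega
  rw [range_pow_Nmap hk, comap_pow_Nmap_spanPQ hk (by omega) (by omega)]
  congr 1 <;> omega

end SpanPQ

lemma card_filter_Ioc_add (P : ℕ → Prop) [DecidablePred P] {a b c : ℕ} (hab : a ≤ b)
    (hbc : b ≤ c) :
    #{j ∈ Ioc a c | P j} = #{j ∈ Ioc a b | P j} + #{j ∈ Ioc b c | P j} := by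
  rw [← Ioc_union_Ioc_eq_Ioc hab hbc, filter_union,
    card_union_of_disjoint (disjoint_filter_filter (Ioc_disjoint_Ioc_of_le le_rfl))]

lemma card_filter_Icc_eq (P : ℕ → Prop) [DecidablePred P] {a c : ℕ} (hac : a < c) :
    #{j ∈ Icc a c | P j} =
      #{j ∈ Ioo a c | P j} + (if P a then 1 else 0) + (if P c then 1 else 0) := by
  rw [← Ico_insert_right hac.le, ← Ioo_insert_left hac, card_filter, card_filter,
    sum_insert (by simp; omega), sum_insert (by simp)]
  ring

section Label

variable {n k : ℕ}

/-- `w` read at the 1-based position `m` used for cups and rays, `false` outside `1, …, n`. -/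
def label (w : Fin n → Bool) (m : ℕ) : Bool :=
  if h : 0 < m ∧ m ≤ n then w ⟨m - 1, by omega⟩ else false

lemma label_eq (w : Fin n → Bool) {m : ℕ} (hm : 1 ≤ m) (h : m - 1 < n) :
    label w m = w ⟨m - 1, h⟩ :=
  dif_pos ⟨hm, by omega⟩

lemma card_filter_fin_eq (w : Fin n → Bool) (β : Bool) {m : ℕ} (hm : m ≤ n) :
    #{j : Fin n | j.val < m ∧ w j = β} = #{j ∈ Ioc 0 m | label w j = β} := by
  refine card_bij (fun j _ => j.val + 1) (fun j hj => ?_)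
    (fun _ _ _ _ h => Fin.ext (by simpa using h)) fun a ha => ?_
  · simp only [mem_filter, mem_univ, true_and] at hj
    simp only [mem_filter, mem_Ioc, label_eq w (Nat.le_add_left 1 j) (by simp), Nat.add_sub_cancel]
    exact ⟨⟨by omega, by omega⟩, hj.2⟩
  · simp only [mem_filter, mem_Ioc] at ha
    refine ⟨⟨a - 1, by omega⟩, ?_, by simp only; omega⟩
    simp only [mem_filter, mem_univ, true_and, ← label_eq w (by omega : 1 ≤ a)]
    exact ⟨by omega, ha.2⟩

lemma tcount_eq (w : Fin n → Bool) {m : ℕ} (hm : m ≤ n) :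
    tcount n w m = #{j ∈ Ioc 0 m | label w j = false} :=
  card_filter_fin_eq w false hm

lemma bcount_eq (w : Fin n → Bool) {m : ℕ} (hm : m ≤ n) :
    bcount n w m = #{j ∈ Ioc 0 m | label w j = true} :=
  card_filter_fin_eq w true hm

lemma tcount_add_bcount (w : Fin n → Bool) {m : ℕ} (hm : m ≤ n) :
    tcount n w m + bcount n w m = m := by
  have := card_filter_add_card_filter_not (s := Ioc 0 m) (fun j => label w j = false)
  simp only [Bool.not_eq_false, Nat.card_Ioc, Nat.sub_zero] at this
  rw [tcount_eq w hm, bcount_eq w hm, this]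

lemma tcount_mono (w : Fin n → Bool) : Monotone (tcount n w) := fun _ _ h =>
  card_le_card fun j hj => by
    simp only [mem_filter, mem_univ, true_and] at hj ⊢
    exact ⟨hj.1.trans_le h, hj.2⟩

lemma bcount_mono (w : Fin n → Bool) : Monotone (bcount n w) := fun _ _ h =>
  card_le_card fun j hj => by
    simp only [mem_filter, mem_univ, true_and] at hj ⊢
    exact ⟨hj.1.trans_le h, hj.2⟩

lemma IsWeightSeq.le {w : Fin n → Bool} (hw : IsWeightSeq n k w) : k ≤ n :=
  hw ▸ (card_filter_le _ _).trans_eq (card_fin n)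

lemma bcount_self {w : Fin n → Bool} (hw : IsWeightSeq n k w) : bcount n w n = k := by
  rw [← hw, bcount]
  simp

lemma tcount_self {w : Fin n → Bool} (hw : IsWeightSeq n k w) : tcount n w n = n - k := by
  have := tcount_add_bcount w le_rfl
  rw [bcount_self hw] at this
  omega

lemma tcount_le {w : Fin n → Bool} (hw : IsWeightSeq n k w) {m : ℕ} (hm : m ≤ n) :
    tcount n w m ≤ n - k :=
  tcount_self hw ▸ tcount_mono w hm

lemma bcount_le {w : Fin n → Bool} (hw : IsWeightSeq n k w) {m : ℕ} (hm : m ≤ n) :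
    bcount n w m ≤ k :=
  bcount_self hw ▸ bcount_mono w hm

end Label

lemma Bool.eq_of_ne_of_ne {a b c : Bool} (hab : a ≠ b) (hac : a ≠ c) : b = c := by
  revert a b c
  decide

namespace CrossinglessMatching

variable {n : ℕ} (C : CrossinglessMatching n)

instance : DecidablePred (Matched n C) := fun _ => by
  unfold Matched
  infer_instance

lemma fst_mem_Ioo_iff {p q : ℕ × ℕ} (hp : p ∈ C.cups) (hq : q ∈ C.cups) :
    q.1 ∈ Ioo p.1 p.2 ↔ q.2 ∈ Ioo p.1 p.2 := by
  rcases eq_or_ne q p with rfl | hqp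
  · simp
  · have := C.disjoint' q hq p hp hqp
    have := C.noncross p hp q hq
    have := C.noncross q hq p hp
    have := C.mem_range q hq
    simp only [mem_Ioo]
    omega

lemma fst_mem_Icc_iff {p q : ℕ × ℕ} (hp : p ∈ C.cups) (hq : q ∈ C.cups) :
    q.1 ∈ Icc p.1 p.2 ↔ q.2 ∈ Icc p.1 p.2 := by
  rcases eq_or_ne q p with rfl | hqp
  · simp [(C.mem_range q hq).2.1.le]
  · have := C.disjoint' q hq p hp hqp
    have := C.fst_mem_Ioo_iff hp hq
    simp only [mem_Icc, mem_Ioo] at this ⊢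
    omega

lemma matched_of_mem_Icc {p : ℕ × ℕ} (hp : p ∈ C.cups) {m : ℕ} (hm : m ∈ Icc p.1 p.2) :
    Matched n C m := by
  rw [mem_Icc] at hm
  rcases hm.1.eq_or_lt with rfl | h1
  · exact ⟨p, hp, Or.inl rfl⟩
  rcases hm.2.eq_or_lt with rfl | h2
  · exact ⟨p, hp, Or.inr rfl⟩
  exact C.rays_outside p hp m h1 h2

lemma fst_le_iff_snd_le {m : ℕ} (hm : ¬ Matched n C m) {q : ℕ × ℕ} (hq : q ∈ C.cups) :
    q.1 ≤ m ↔ q.2 ≤ m := by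
  have := C.mem_range q hq
  refine ⟨fun h => ?_, fun h => by omega⟩
  by_contra h'
  exact hm (C.matched_of_mem_Icc hq (mem_Icc.2 ⟨h, by omega⟩))

lemma fst_mem_Ioc_zero_iff {m : ℕ} (hm : ¬ Matched n C m) {q : ℕ × ℕ} (hq : q ∈ C.cups) :
    q.1 ∈ Ioc 0 m ↔ q.2 ∈ Ioc 0 m := by
  have := C.fst_le_iff_snd_le hm hq
  have := C.mem_range q hq
  simp only [mem_Ioc]
  omega

lemma fst_mem_Ioc_iff {m : ℕ} (hm : ¬ Matched n C m) {q : ℕ × ℕ} (hq : q ∈ C.cups) :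
    q.1 ∈ Ioc m n ↔ q.2 ∈ Ioc m n := by
  have := C.fst_le_iff_snd_le hm hq
  have := C.mem_range q hq
  simp only [mem_Ioc]
  omega

variable (v : ℕ → Bool)

theorem card_filter_eq_card_cups_add (β : Bool) {U : Finset ℕ}
    (hU : ∀ p ∈ C.cups, p.1 ∈ U ↔ p.2 ∈ U)
    (hopp : ∀ p ∈ C.cups, p.1 ∈ U → v p.1 ≠ v p.2) :
    #{j ∈ U | v j = β} =
      #{p ∈ C.cups | p.1 ∈ U} + #{j ∈ U | ¬ Matched n C j ∧ v j = β} := by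
  rw [← card_filter_add_card_filter_not (s := {j ∈ U | v j = β}) (Matched n C), filter_filter,
    filter_filter]
  congr 1
  · symm
    refine card_bij (fun p _ => if v p.1 = β then p.1 else p.2) (fun p hp => ?_)
      (fun p hp q hq hpq => ?_) fun j hj => ?_
    · simp only [mem_filter] at hp ⊢
      have := hopp p hp.1 hp.2
      split_ifs with h
      · exact ⟨hp.2, h, p, hp.1, Or.inl rfl⟩
      · exact ⟨(hU p hp.1).1 hp.2, Bool.eq_of_ne_of_ne this h, p, hp.1, Or.inr rfl⟩
    · by_contra hne
      have := C.disjoint' p (mem_filter.1 hp).1 q (mem_filter.1 hq).1 hne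
      split_ifs at hpq <;> omega
    · simp only [mem_filter] at hj
      obtain ⟨hjU, hjβ, p, hp, rfl | rfl⟩ := hj
      · exact ⟨p, mem_filter.2 ⟨hp, hjU⟩, if_pos hjβ⟩
      · have hpU := (hU p hp).2 hjU
        exact ⟨p, mem_filter.2 ⟨hp, hpU⟩, if_neg fun h => hopp p hp hpU (h.trans hjβ.symm)⟩
  · simp_rw [and_comm]

lemma card_filter_eq_card_cups (β : Bool) {U : Finset ℕ}
    (hU : ∀ p ∈ C.cups, p.1 ∈ U ↔ p.2 ∈ U)
    (hopp : ∀ p ∈ C.cups, p.1 ∈ U → v p.1 ≠ v p.2)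
    (hmatched : ∀ j ∈ U, Matched n C j) :
    #{j ∈ U | v j = β} = #{p ∈ C.cups | p.1 ∈ U} := by
  rw [C.card_filter_eq_card_cups_add v β hU hopp, add_eq_left, card_eq_zero,
    filter_eq_empty_iff]
  exact fun j hj h => h.1 (hmatched j hj)

lemma card_filter_true_eq_card_cups {U : Finset ℕ}
    (hU : ∀ p ∈ C.cups, p.1 ∈ U ↔ p.2 ∈ U)
    (hopp : ∀ p ∈ C.cups, p.1 ∈ U → v p.1 ≠ v p.2)
    (hrays : ∀ j ∈ U, ¬ Matched n C j → v j = false) :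
    #{j ∈ U | v j = true} = #{p ∈ C.cups | p.1 ∈ U} := by
  rw [C.card_filter_eq_card_cups_add v true hU hopp, add_eq_left, card_eq_zero,
    filter_eq_empty_iff]
  exact fun j hj h => by simp [hrays j hj h.1] at h

lemma card_filter_true_le_card_filter_false {U : Finset ℕ}
    (hU : ∀ p ∈ C.cups, p.1 ∈ U ↔ p.2 ∈ U)
    (hopp : ∀ p ∈ C.cups, p.1 ∈ U → v p.1 ≠ v p.2)
    (hrays : ∀ j ∈ U, ¬ Matched n C j → v j = false) :
    #{j ∈ U | v j = true} ≤ #{j ∈ U | v j = false} := by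
  rw [C.card_filter_true_eq_card_cups v hU hopp hrays,
    C.card_filter_eq_card_cups_add v false hU hopp]
  exact le_self_add

theorem balanced_iff_opposite :
    (∀ p ∈ C.cups, #{j ∈ Icc p.1 p.2 | v j = false} = #{j ∈ Icc p.1 p.2 | v j = true}) ↔
      ∀ p ∈ C.cups, v p.1 ≠ v p.2 := by
  refine ⟨fun hbal p hp => ?_, fun hopp p hp => ?_⟩
  · obtain ⟨d, hd⟩ : ∃ d, p.2 - p.1 = d := ⟨_, rfl⟩
    induction d using Nat.strong_induction_on generalizing p with
    | _ d ih =>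
    -- the interior of `p` is tiled by narrower cups, which are oriented, so it is balanced
    have hinner (β : Bool) :
        #{j ∈ Ioo p.1 p.2 | v j = β} = #{q ∈ C.cups | q.1 ∈ Ioo p.1 p.2} :=
      C.card_filter_eq_card_cups v β (fun q hq => C.fst_mem_Ioo_iff hp hq)
        (fun q hq hq1 => ih _ (by
            have := (C.fst_mem_Ioo_iff hp hq).1 hq1
            simp only [mem_Ioo] at hq1 this
            omega) q hq rfl)
        fun j hj => C.matched_of_mem_Icc hp (Ioo_subset_Icc_self hj)
    have := hbal p hp
    rw [card_filter_Icc_eq _ (C.mem_range p hp).2.1, card_filter_Icc_eq _ (C.mem_range p hp).2.1,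
      hinner, hinner] at this
    intro h
    rw [h] at this
    cases hv : v p.2 <;> simp [hv] at this <;> omega
  · rw [C.card_filter_eq_card_cups v false (fun q hq => C.fst_mem_Icc_iff hp hq)
      (fun q hq _ => hopp q hq) fun j => C.matched_of_mem_Icc hp,
      C.card_filter_eq_card_cups v true (fun q hq => C.fst_mem_Icc_iff hp hq)
      (fun q hq _ => hopp q hq) fun j => C.matched_of_mem_Icc hp]

end CrossinglessMatching

section PhiFlag

variable {n k : ℕ} {w : Fin n → Bool}

lemma isNFlag_phiFlag (hw : IsWeightSeq n k w) : IsNFlag n k (PhiFlag n k w) := by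
  have hk := hw.le
  refine ⟨fun i j hij => spanPQ_mono (tcount_mono w hij) (bcount_mono w hij), fun i => ?_,
    fun i => ?_⟩
  · rw [PhiFlag, finrank_spanPQ hk (tcount_le hw i.is_le) (bcount_le hw i.is_le),
      tcount_add_bcount w i.is_le]
  · have := tcount_add_bcount w i.is_lt
    have := tcount_add_bcount w i.is_lt.le
    have := tcount_mono w (Nat.le_succ i.val)
    have := bcount_mono w (Nat.le_succ i.val)
    simp only [PhiFlag, Fin.val_succ, Fin.val_castSucc]
    rw [map_Nmap_spanPQ hk (tcount_le hw i.is_lt) (bcount_le hw i.is_lt)]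
    exact spanPQ_mono (by omega) (by omega)

lemma map_pow_Nmap_phiFlag_eq_iff (hw : IsWeightSeq n k w) {i j : ℕ} (hi : 1 ≤ i) (hij : i < j)
    (hj : j ≤ n) :
    Submodule.map (Nmap n k ^ ((j - i + 1) / 2)) (spanPQ n k (tcount n w j) (bcount n w j)) =
        spanPQ n k (tcount n w (i - 1)) (bcount n w (i - 1)) ↔
      #{m ∈ Icc i j | label w m = false} = #{m ∈ Icc i j | label w m = true} := by
  have hk := hw.le
  have hi' : i - 1 ≤ n := by omega
  have hIcc : Icc i j = Ioc (i - 1) j := by rw [← Icc_add_one_left_eq_Ioc, Nat.sub_add_cancel hi]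
  have ht : tcount n w j = tcount n w (i - 1) + #{m ∈ Icc i j | label w m = false} := by
    rw [tcount_eq w hj, tcount_eq w hi', hIcc]
    exact card_filter_Ioc_add _ (Nat.zero_le _) (by omega)
  have hb : bcount n w j = bcount n w (i - 1) + #{m ∈ Icc i j | label w m = true} := by
    rw [bcount_eq w hj, bcount_eq w hi', hIcc]
    exact card_filter_Ioc_add _ (Nat.zero_le _) (by omega)
  have := tcount_add_bcount w hj
  have := tcount_add_bcount w hi'
  rw [map_pow_Nmap_spanPQ hk (tcount_le hw hj) (bcount_le hw hj),
    spanPQ_inj hk ((Nat.sub_le _ _).trans (tcount_le hw hj))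
      ((Nat.sub_le _ _).trans (bcount_le hw hj)) (tcount_le hw hi') (bcount_le hw hi')]
  omega

lemma cupCond_phiFlag_iff {C : CrossinglessMatching n} (hw : IsWeightSeq n k w) :
    CupCond n k C (PhiFlag n k w) ↔
      ∀ p ∈ C.cups,
        #{m ∈ Icc p.1 p.2 | label w m = false} = #{m ∈ Icc p.1 p.2 | label w m = true} := by
  refine forall₂_congr fun p hp => ?_
  have := C.mem_range p hp
  rw [← map_pow_Nmap_phiFlag_eq_iff hw this.1 this.2.1 this.2.2]
  exact ⟨fun h => h (by omega) (by omega), fun h _ _ => h⟩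

lemma orientsMatching_iff {C : CrossinglessMatching n} {u : Fin n → Bool} :
    OrientsMatching n u C ↔
      (∀ p ∈ C.cups, label u p.1 ≠ label u p.2) ∧
        ∀ m ∈ Ioc 0 n, ¬ Matched n C m → label u m = false := by
  refine and_congr (forall₂_congr fun p hp => ?_) (forall_congr' fun m => ?_)
  · have := C.mem_range p hp
    rw [label_eq u this.1 (by omega), label_eq u (by omega) (by omega)]
    exact ⟨fun h => h _ _, fun h _ _ => h⟩
  · rw [mem_Ioc]
    refine ⟨fun h hm hum => ?_, fun h hm hmn hum hlt => ?_⟩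
    · rw [label_eq u hm.1 (by omega)]
      exact h hm.1 hm.2 hum _
    · rw [← label_eq u hm hlt]
      exact h ⟨hm, hmn⟩ hum

lemma label_tabWeight_eq_true_iff {S : StandardTableau n k} {C : CrossinglessMatching n}
    (hC : IsMatchOf n k S C) {m : ℕ} (hm : m ∈ Ioc 0 n) :
    label (tabWeight n k S) m = true ↔ ∃ p ∈ C.cups, p.1 = m := by
  rw [mem_Ioc] at hm
  rw [label_eq _ hm.1 (by omega), tabWeight, decide_eq_true_iff, Nat.sub_add_cancel hm.1, hC.2]

lemma orientsMatching_tabWeight {S : StandardTableau n k} {C : CrossinglessMatching n}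
    (hC : IsMatchOf n k S C) : OrientsMatching n (tabWeight n k S) C := by
  refine orientsMatching_iff.2 ⟨fun p hp => ?_, fun m hm hum => ?_⟩
  · have := C.mem_range p hp
    have h₁ : label (tabWeight n k S) p.1 = true :=
      (label_tabWeight_eq_true_iff hC (mem_Ioc.2 (by omega))).2 ⟨p, hp, rfl⟩
    have h₂ : label (tabWeight n k S) p.2 = false := by
      refine Bool.eq_false_iff.2 fun h => ?_
      obtain ⟨q, hq, hqp⟩ := (label_tabWeight_eq_true_iff hC (mem_Ioc.2 (by omega))).1 h
      have hne : q ≠ p := by rintro rfl; omega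
      exact (C.disjoint' q hq p hp hne).2.1 hqp
    rw [h₁, h₂]
    decide
  · refine Bool.eq_false_iff.2 fun h => ?_
    obtain ⟨q, hq, rfl⟩ := (label_tabWeight_eq_true_iff hC hm).1 h
    exact hum ⟨q, hq, Or.inl rfl⟩

lemma label_eq_false_of_not_matched {C : CrossinglessMatching n} (hC : C.cups.card = k)
    (hw : IsWeightSeq n k w) (hopp : ∀ p ∈ C.cups, label w p.1 ≠ label w p.2) :
    ∀ m ∈ Ioc 0 n, ¬ Matched n C m → label w m = false := by
  have hU (p : ℕ × ℕ) (hp : p ∈ C.cups) : p.1 ∈ Ioc 0 n ∧ p.2 ∈ Ioc 0 n := by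
    have := C.mem_range p hp
    simp only [mem_Ioc]
    omega
  have hcount := C.card_filter_eq_card_cups_add (label w) true
    (fun p hp => iff_of_true (hU p hp).1 (hU p hp).2) fun p hp _ => hopp p hp
  rw [← bcount_eq w le_rfl, bcount_self hw, filter_true_of_mem fun p hp => (hU p hp).1, hC,
    left_eq_add, card_eq_zero, filter_eq_empty_iff] at hcount
  exact fun m hm hum => Bool.eq_false_iff.2 fun h => hcount hm ⟨hum, h⟩

lemma bcount_eq_card_cups_of_not_matched {C : CrossinglessMatching n} {u : Fin n → Bool}
    (hu : OrientsMatching n u C) {m : ℕ} (hm : m ≤ n) (hum : ¬ Matched n C m) :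
    bcount n u m = #{p ∈ C.cups | p.1 ∈ Ioc 0 m} := by
  obtain ⟨hopp, hrays⟩ := orientsMatching_iff.1 hu
  rw [bcount_eq u hm]
  exact C.card_filter_true_eq_card_cups _ (fun q => C.fst_mem_Ioc_zero_iff hum)
    (fun q hq _ => hopp q hq) fun j hj => hrays j (Ioc_subset_Ioc_right hm hj)

lemma rayCond_phiFlag {S : StandardTableau n k} {C : CrossinglessMatching n}
    (hC : IsMatchOf n k S C) (hw : IsWeightSeq n k w) (hu : OrientsMatching n w C) :
    RayCond n k (tabWeight n k S) C (PhiFlag n k w) := by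
  intro m _ hm hum
  have hmn : m ≤ n := by omega
  have hS := orientsMatching_tabWeight hC
  have hb : bcount n (tabWeight n k S) m = bcount n w m := by
    rw [bcount_eq_card_cups_of_not_matched hS hmn hum,
      bcount_eq_card_cups_of_not_matched hu hmn hum]
  have ht : tcount n (tabWeight n k S) m = tcount n w m := by
    have := tcount_add_bcount (tabWeight n k S) hmn
    have := tcount_add_bcount w hmn
    omega
  obtain ⟨hopp, hrays⟩ := orientsMatching_iff.1 hu
  -- no cup passes over `m`, so on either side of `m` there are at least as many `∧` as `∨`
  have hleft := C.card_filter_true_le_card_filter_false (label w)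
    (fun q => C.fst_mem_Ioc_zero_iff hum) (fun q hq _ => hopp q hq)
    fun j hj => hrays j (Ioc_subset_Ioc_right hmn hj)
  have hright := C.card_filter_true_le_card_filter_false (label w)
    (fun q => C.fst_mem_Ioc_iff hum) (fun q hq _ => hopp q hq)
    fun j hj => hrays j (Ioc_subset_Ioc_left (Nat.zero_le m) hj)
  have hb' := card_filter_Ioc_add (fun j => label w j = true) (Nat.zero_le m) hmn
  have ht' := card_filter_Ioc_add (fun j => label w j = false) (Nat.zero_le m) hmn
  rw [← bcount_eq w le_rfl, bcount_self hw, ← bcount_eq w hmn] at hb'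
  rw [← tcount_eq w le_rfl, tcount_self hw, ← tcount_eq w hmn] at ht'
  rw [← tcount_eq w hmn, ← bcount_eq w hmn] at hleft
  rw [ht, hb]
  exact (comap_pow_range_pow_Nmap hleft (bcount_le hw hmn) (by omega)).symm

end PhiFlag

theorem fixed_point_in_component_iff_general (n k : ℕ)
    (S : StandardTableau n k) (C : CrossinglessMatching n) (hC : IsMatchOf n k S C)
    (w : Fin n → Bool) (hw : IsWeightSeq n k w) :
    InYS n k S C (PhiFlag n k w) ↔ OrientsMatching n w C := by
  rw [InYS, cupCond_phiFlag_iff hw, C.balanced_iff_opposite (label w)]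
  constructor
  · rintro ⟨-, hopp, -⟩
    exact orientsMatching_iff.2 ⟨hopp, label_eq_false_of_not_matched hC.1 hw hopp⟩
  · intro hu
    exact ⟨isNFlag_phiFlag hw, (orientsMatching_iff.1 hu).1, rayCond_phiFlag hC hw hu⟩

/-- For a standard tableau `S` with matching `m(S) = C`, the fixed flag
`Φ(w)` lies in the component `Y_S` if and only if `w` orients `m(S)`. -/
theorem fixed_point_in_component_iff (n k : ℕ) (hn : 1 ≤ n) (hkn : 2 * k ≤ n)
    (S : StandardTableau n k) (C : CrossinglessMatching n) (hC : IsMatchOf n k S C)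
    (w : Fin n → Bool) (hw : IsWeightSeq n k w) :
    InYS n k S C (PhiFlag n k w) ↔ OrientsMatching n w C :=
  fixed_point_in_component_iff_general n k S C hC w hw

end Springer
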